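/- If U is a random variable whose conditional CDF given a sigma-field 𝒢 is almost surely continuous and strictly increasing, then F(U) given 𝒢 is Uniform[0,1], where F(u) = P(U ≤ u | 𝒢); in particular F(U) is independent of 𝒢. -/

import Mathlib

open MeasureTheory ProbabilityTheory ENNReal
set_option maxHeartbeats 1000000


theorem pit_finite_upper {Ω : Type*} [m0 : MeasurableSpace Ω] (P : Measure Ω)
    [IsProbabilityMeasure P]
    (𝒢 : MeasurableSpace Ω) (h𝒢 : 𝒢 ≤ m0)
    (U : Ω → ℝ)
    (g : ℚ → Ω → ℝ)
    (hgm : ∀ r, StronglyMeasurable[𝒢] (g r))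
    (hgint : ∀ r, Integrable (g r) P)
    (hgset : ∀ (r : ℚ) (D : Set Ω), MeasurableSet[𝒢] D →
      ∫ x in D, g r x ∂P = (P (D ∩ {ω | U ω ≤ (r : ℝ)})).toReal)
    (c : ℝ) (hc : 0 ≤ c) (s : Finset ℚ) :
    ∀ G : Set Ω, MeasurableSet[𝒢] G →
      (P (G ∩ ⋃ r ∈ s, ({ω | U ω ≤ (r:ℝ)} ∩ {ω | g r ω < c}))).toReal ≤ c * (P G).toReal := by
  classical
  letI _i : MeasurableSpace Ω := m0
  induction s using Finset.induction_on_max with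
  | empty =>
    intro G hG
    simp [mul_nonneg hc ENNReal.toReal_nonneg]
  | insert a s ha ih =>
    intro G hG
    set C : Set Ω := {ω | g a ω < c} with hCdef
    have hCG : MeasurableSet[𝒢] C := measurableSet_lt (hgm a).measurable measurable_const
    have hsub : G ∩ ⋃ r ∈ insert a s, ({ω | U ω ≤ (r:ℝ)} ∩ {ω | g r ω < c}) ⊆
        ((G ∩ C) ∩ {ω | U ω ≤ (a:ℝ)}) ∪
          ((G ∩ Cᶜ) ∩ ⋃ r ∈ s, ({ω | U ω ≤ (r:ℝ)} ∩ {ω | g r ω < c})) := by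
      rintro ω ⟨hωG, hωY⟩
      simp only [Set.mem_iUnion, Set.mem_inter_iff, Set.mem_setOf_eq] at hωY
      obtain ⟨r, hrs, hUr, hgr⟩ := hωY
      by_cases hωC : ω ∈ C
      · left
        have hra : (r : ℝ) ≤ (a : ℝ) := by
          rcases Finset.mem_insert.1 hrs with rfl | hr
          · exact le_refl _
          · exact_mod_cast (ha r hr).le
        exact ⟨⟨hωG, hωC⟩, le_trans hUr hra⟩
      · right
        refine ⟨⟨hωG, hωC⟩, ?_⟩
        rcases Finset.mem_insert.1 hrs with rfl | hr
        · exact absurd hgr hωC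
        · simp only [Set.mem_iUnion, Set.mem_inter_iff, Set.mem_setOf_eq]
          exact ⟨r, hr, hUr, hgr⟩
    have key1 : (P ((G ∩ C) ∩ {ω | U ω ≤ (a:ℝ)})).toReal ≤ c * (P (G ∩ C)).toReal := by
      rw [← hgset a (G ∩ C) (hG.inter hCG)]
      calc ∫ x in G ∩ C, g a x ∂P ≤ ∫ x in G ∩ C, c ∂P := by
            refine setIntegral_mono_on (hgint a).integrableOn
              (integrableOn_const (measure_ne_top _ _))
              (h𝒢 _ (hG.inter hCG)) (fun x hx => hx.2.le)
        _ = c * (P (G ∩ C)).toReal := by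
            rw [setIntegral_const, measureReal_def, smul_eq_mul, mul_comm]
    have key2 : (P ((G ∩ Cᶜ) ∩ ⋃ r ∈ s, ({ω | U ω ≤ (r:ℝ)} ∩ {ω | g r ω < c}))).toReal ≤
        c * (P (G ∩ Cᶜ)).toReal := ih (G ∩ Cᶜ) (hG.inter hCG.compl)
    have hle : P (G ∩ ⋃ r ∈ insert a s, ({ω | U ω ≤ (r:ℝ)} ∩ {ω | g r ω < c})) ≤
        P ((G ∩ C) ∩ {ω | U ω ≤ (a:ℝ)}) +
          P ((G ∩ Cᶜ) ∩ ⋃ r ∈ s, ({ω | U ω ≤ (r:ℝ)} ∩ {ω | g r ω < c})) :=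
      (measure_mono hsub).trans (measure_union_le _ _)
    have hfin1 : P ((G ∩ C) ∩ {ω | U ω ≤ (a:ℝ)}) ≠ ⊤ := measure_ne_top _ _
    have hfin2 : P ((G ∩ Cᶜ) ∩ ⋃ r ∈ s, ({ω | U ω ≤ (r:ℝ)} ∩ {ω | g r ω < c})) ≠ ⊤ :=
      measure_ne_top _ _
    have hle' : (P (G ∩ ⋃ r ∈ insert a s, ({ω | U ω ≤ (r:ℝ)} ∩ {ω | g r ω < c}))).toReal ≤
        (P ((G ∩ C) ∩ {ω | U ω ≤ (a:ℝ)})).toReal +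
          (P ((G ∩ Cᶜ) ∩ ⋃ r ∈ s, ({ω | U ω ≤ (r:ℝ)} ∩ {ω | g r ω < c}))).toReal := by
      rw [← ENNReal.toReal_add hfin1 hfin2]
      exact ENNReal.toReal_mono (ENNReal.add_ne_top.2 ⟨hfin1, hfin2⟩) hle
    have hsplitG : (P (G ∩ C)).toReal + (P (G ∩ Cᶜ)).toReal = (P G).toReal := by
      have := measure_inter_add_diff (μ := P) G (h𝒢 _ hCG)
      rw [Set.diff_eq] at this
      rw [← ENNReal.toReal_add (measure_ne_top _ _) (measure_ne_top _ _), this]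
    calc (P (G ∩ ⋃ r ∈ insert a s, ({ω | U ω ≤ (r:ℝ)} ∩ {ω | g r ω < c}))).toReal
        ≤ _ + _ := hle'
      _ ≤ c * (P (G ∩ C)).toReal + c * (P (G ∩ Cᶜ)).toReal := add_le_add key1 key2
      _ = c * (P G).toReal := by rw [← mul_add, hsplitG]


theorem pit_finite_lower {Ω : Type*} [m0 : MeasurableSpace Ω] (P : Measure Ω)
    [IsProbabilityMeasure P]
    (𝒢 : MeasurableSpace Ω) (h𝒢 : 𝒢 ≤ m0)
    (U : Ω → ℝ) (hU : ∀ a : ℚ, MeasurableSet[m0] {ω | U ω ≤ (a:ℝ)})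
    (g : ℚ → Ω → ℝ)
    (hgm : ∀ r, StronglyMeasurable[𝒢] (g r))
    (hgint : ∀ r, Integrable (g r) P)
    (hgset : ∀ (r : ℚ) (D : Set Ω), MeasurableSet[𝒢] D →
      ∫ x in D, g r x ∂P = (P (D ∩ {ω | U ω ≤ (r : ℝ)})).toReal)
    (t : ℝ) (ht : t ≤ 1) (s : Finset ℚ) :
    ∀ G : Set Ω, MeasurableSet[𝒢] G →
      (P (G ∩ ⋃ r ∈ s, ({ω | (r:ℝ) < U ω} ∩ {ω | t ≤ g r ω}))).toReal ≤
        (1 - t) * (P G).toReal := by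
  classical
  letI _i : MeasurableSpace Ω := m0
  induction s using Finset.induction_on_min with
  | empty =>
    intro G hG
    simp [mul_nonneg (by linarith : (0:ℝ) ≤ 1 - t) ENNReal.toReal_nonneg]
  | insert a s ha ih =>
    intro G hG
    set C : Set Ω := {ω | t ≤ g a ω} with hCdef
    have hCG : MeasurableSet[𝒢] C := measurableSet_le measurable_const (hgm a).measurable
    have hsub : G ∩ ⋃ r ∈ insert a s, ({ω | (r:ℝ) < U ω} ∩ {ω | t ≤ g r ω}) ⊆
        ((G ∩ C) ∩ {ω | (a:ℝ) < U ω}) ∪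
          ((G ∩ Cᶜ) ∩ ⋃ r ∈ s, ({ω | (r:ℝ) < U ω} ∩ {ω | t ≤ g r ω})) := by
      rintro ω ⟨hωG, hωY⟩
      simp only [Set.mem_iUnion, Set.mem_inter_iff, Set.mem_setOf_eq] at hωY
      obtain ⟨r, hrs, hUr, hgr⟩ := hωY
      by_cases hωC : ω ∈ C
      · left
        have hra : (a : ℝ) ≤ (r : ℝ) := by
          rcases Finset.mem_insert.1 hrs with rfl | hr
          · exact le_refl _
          · exact_mod_cast (ha r hr).le
        exact ⟨⟨hωG, hωC⟩, lt_of_le_of_lt hra hUr⟩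
      · right
        refine ⟨⟨hωG, hωC⟩, ?_⟩
        rcases Finset.mem_insert.1 hrs with rfl | hr
        · exact absurd hgr hωC
        · simp only [Set.mem_iUnion, Set.mem_inter_iff, Set.mem_setOf_eq]
          exact ⟨r, hr, hUr, hgr⟩
    have hDsplit : (P ((G ∩ C) ∩ {ω | U ω ≤ (a:ℝ)})).toReal +
        (P ((G ∩ C) ∩ {ω | (a:ℝ) < U ω})).toReal = (P (G ∩ C)).toReal := by
      have hme : MeasurableSet {ω | U ω ≤ (a:ℝ)} := hU a
      have := measure_inter_add_diff (μ := P) (G ∩ C) hme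
      rw [← ENNReal.toReal_add (measure_ne_top _ _) (measure_ne_top _ _)]
      rw [show (G ∩ C) \ {ω | U ω ≤ (a:ℝ)} = (G ∩ C) ∩ {ω | (a:ℝ) < U ω} from by
        ext ω; simp [Set.diff_eq, not_le]]at this
      rw [this]
    have key1 : (P ((G ∩ C) ∩ {ω | (a:ℝ) < U ω})).toReal ≤ (1 - t) * (P (G ∩ C)).toReal := by
      have hlow : t * (P (G ∩ C)).toReal ≤ (P ((G ∩ C) ∩ {ω | U ω ≤ (a:ℝ)})).toReal := by
        rw [← hgset a (G ∩ C) (MeasurableSet.inter hG hCG)]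
        calc t * (P (G ∩ C)).toReal = ∫ _x in G ∩ C, t ∂P := by
              rw [setIntegral_const, measureReal_def, smul_eq_mul, mul_comm]
          _ ≤ ∫ x in G ∩ C, g a x ∂P := by
              refine setIntegral_mono_on
                (integrableOn_const (measure_ne_top _ _))
                (hgint a).integrableOn
                (h𝒢 _ (MeasurableSet.inter hG hCG)) (fun x hx => hx.2)
      linarith [hDsplit]
    have key2 : (P ((G ∩ Cᶜ) ∩ ⋃ r ∈ s, ({ω | (r:ℝ) < U ω} ∩ {ω | t ≤ g r ω}))).toReal ≤
        (1 - t) * (P (G ∩ Cᶜ)).toReal := ih (G ∩ Cᶜ) (MeasurableSet.inter hG (MeasurableSet.compl hCG))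
    have hle : P (G ∩ ⋃ r ∈ insert a s, ({ω | (r:ℝ) < U ω} ∩ {ω | t ≤ g r ω})) ≤
        P ((G ∩ C) ∩ {ω | (a:ℝ) < U ω}) +
          P ((G ∩ Cᶜ) ∩ ⋃ r ∈ s, ({ω | (r:ℝ) < U ω} ∩ {ω | t ≤ g r ω})) :=
      (measure_mono hsub).trans (measure_union_le _ _)
    have hfin1 : P ((G ∩ C) ∩ {ω | (a:ℝ) < U ω}) ≠ ⊤ := measure_ne_top _ _
    have hfin2 : P ((G ∩ Cᶜ) ∩ ⋃ r ∈ s, ({ω | (r:ℝ) < U ω} ∩ {ω | t ≤ g r ω})) ≠ ⊤ :=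
      measure_ne_top _ _
    have hle' : (P (G ∩ ⋃ r ∈ insert a s, ({ω | (r:ℝ) < U ω} ∩ {ω | t ≤ g r ω}))).toReal ≤
        (P ((G ∩ C) ∩ {ω | (a:ℝ) < U ω})).toReal +
          (P ((G ∩ Cᶜ) ∩ ⋃ r ∈ s, ({ω | (r:ℝ) < U ω} ∩ {ω | t ≤ g r ω}))).toReal := by
      rw [← ENNReal.toReal_add hfin1 hfin2]
      exact ENNReal.toReal_mono (ENNReal.add_ne_top.2 ⟨hfin1, hfin2⟩) hle
    have hsplitG : (P (G ∩ C)).toReal + (P (G ∩ Cᶜ)).toReal = (P G).toReal := by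
      have := measure_inter_add_diff (μ := P) G (h𝒢 _ hCG)
      rw [Set.diff_eq] at this
      rw [← ENNReal.toReal_add (measure_ne_top _ _) (measure_ne_top _ _), this]
    calc (P (G ∩ ⋃ r ∈ insert a s, ({ω | (r:ℝ) < U ω} ∩ {ω | t ≤ g r ω}))).toReal
        ≤ _ + _ := hle'
      _ ≤ (1 - t) * (P (G ∩ C)).toReal + (1 - t) * (P (G ∩ Cᶜ)).toReal := add_le_add key1 key2
      _ = (1 - t) * (P G).toReal := by rw [← mul_add, hsplitG]


theorem pit_iUnion_bound {Ω : Type*} [MeasurableSpace Ω] (P : Measure Ω)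
    (B : ℚ → Set Ω) (G : Set Ω) (M : ℝ≥0∞)
    (h : ∀ s : Finset ℚ, P (G ∩ ⋃ r ∈ s, B r) ≤ M) :
    P (G ∩ ⋃ r, B r) ≤ M := by
  classical
  obtain ⟨e, he⟩ : ∃ e : ℕ → ℚ, Function.Surjective e :=
    ⟨_, (Denumerable.eqv ℚ).symm.surjective⟩
  set K : ℕ → Set Ω := fun n => G ∩ ⋃ r ∈ (Finset.range n).image e, B r with hK
  have hmono : Monotone K := by
    intro m n hmn
    refine Set.inter_subset_inter_right _ (Set.iUnion₂_subset fun r hr => ?_)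
    refine Set.subset_iUnion₂ (s := fun r _ => B r) r ?_
    simp only [Finset.mem_image, Finset.mem_range] at hr ⊢
    obtain ⟨i, hi, rfl⟩ := hr
    exact ⟨i, lt_of_lt_of_le hi hmn, rfl⟩
  have hun : ⋃ n, K n = G ∩ ⋃ r, B r := by
    ext ω
    simp only [hK, Set.mem_iUnion, Set.mem_inter_iff, Finset.mem_image, Finset.mem_range]
    constructor
    · rintro ⟨n, hωG, hωB⟩
      obtain ⟨r, _, hr⟩ := hωB
      exact ⟨hωG, r, hr⟩
    · rintro ⟨hωG, r, hr⟩
      obtain ⟨n, rfl⟩ := he r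
      exact ⟨n + 1, hωG, e n, ⟨n, Nat.lt_succ_self _, rfl⟩, hr⟩
  have := tendsto_measure_iUnion_atTop (μ := P) hmono
  rw [hun] at this
  exact le_of_tendsto this (Filter.Eventually.of_forall fun n => h _)


/-- Conditional probability integral transform: if `F(u) = P(U ≤ u | 𝒢)` is a.s. continuous
and strictly increasing, then `F(U)` given `𝒢` is `Uniform[0,1]`; in particular `F(U)` is
independent of `𝒢` (its conditional CDF given `𝒢` is the deterministic uniform CDF). -/
theorem conditional_pit_uniform
    {Ω : Type*} (𝒢 : MeasurableSpace Ω) [m0 : MeasurableSpace Ω] (P : Measure Ω) [IsProbabilityMeasure P]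
    (h𝒢 : 𝒢 ≤ m0)
    (U : Ω → ℝ) (hU : Measurable U)
    (F : Ω → ℝ → ℝ) (hFmeas : ∀ u : ℝ, Measurable fun ω => F ω u)
    (hver : ∀ u : ℝ,
      (fun ω => F ω u) =ᵐ[P] P[Set.indicator {ω | U ω ≤ u} (fun _ => (1:ℝ)) | 𝒢])
    (hreg : ∀ᵐ ω ∂P, Continuous (F ω) ∧ StrictMono (F ω)) :
    ∀ t ∈ Set.Icc (0:ℝ) 1,
      P[Set.indicator {ω | F ω (U ω) ≤ t} (fun _ => (1:ℝ)) | 𝒢] =ᵐ[P] fun _ => t := by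
  classical
  intro t ht
  letI _i : MeasurableSpace Ω := m0
  have hUm : Measurable[m0] U := hU
  have hUset : ∀ u : ℝ, MeasurableSet[m0] {ω | U ω ≤ u} := fun u =>
    measurableSet_le hUm measurable_const
  have hind_int : ∀ u : ℝ, Integrable (Set.indicator {ω | U ω ≤ u} (fun _ => (1:ℝ))) P :=
    fun u => (integrable_const (1:ℝ)).indicator (hUset u)
  set g : ℚ → Ω → ℝ :=
    fun r => P[Set.indicator {ω | U ω ≤ ((r:ℝ))} (fun _ => (1:ℝ)) | 𝒢] with hg
  have hgm : ∀ r : ℚ, StronglyMeasurable[𝒢] (g r) := fun r => stronglyMeasurable_condExp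
  have hgmm0 : ∀ r : ℚ, Measurable[m0] (g r) := fun r =>
    ((hgm r).measurable).mono h𝒢 le_rfl
  have hgint : ∀ r : ℚ, Integrable (g r) P := fun r => integrable_condExp
  have hgset : ∀ (r : ℚ) (D : Set Ω), MeasurableSet[𝒢] D →
      ∫ x in D, g r x ∂P = (P (D ∩ {ω | U ω ≤ (r:ℝ)})).toReal := by
    intro r D hD
    rw [hg, setIntegral_condExp h𝒢 (hind_int (r:ℝ)) hD,
      setIntegral_indicator (hUset (r:ℝ)), setIntegral_const, measureReal_def, smul_eq_mul, mul_one]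
  set A : ℚ → Set Ω := fun q => ⋃ r : ℚ, ({ω | U ω ≤ (r:ℝ)} ∩ {ω | g r ω < (q:ℝ)}) with hA
  set T : Set Ω := ⋂ q : {q : ℚ // t < (q:ℝ)}, A q with hT
  set A' : Set Ω := ⋃ r : ℚ, ({ω | (r:ℝ) < U ω} ∩ {ω | t ≤ g r ω}) with hA'
  have hAmeas : ∀ q : ℚ, MeasurableSet[m0] (A q) := fun q =>
    MeasurableSet.iUnion fun r =>
      (hUset (r:ℝ)).inter (measurableSet_lt (hgmm0 r) measurable_const)
  have hTmeas : MeasurableSet[m0] T := MeasurableSet.iInter fun q => hAmeas q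
  -- a.e. identification of the target set with T and the complement bound
  have hFg : ∀ᵐ ω ∂P, ∀ r : ℚ, F ω (r:ℝ) = g r ω := ae_all_iff.2 fun r => hver (r:ℝ)
  have hae : ∀ᵐ ω ∂P, (F ω (U ω) ≤ t ↔ ω ∈ T) ∧ (t < F ω (U ω) → ω ∈ A') := by
    filter_upwards [hFg, hreg] with ω hωg hωreg
    obtain ⟨hcont, hmono⟩ := hωreg
    refine ⟨⟨?_, ?_⟩, ?_⟩
    · intro hle
      rw [hT, Set.mem_iInter]
      rintro ⟨q, hq⟩
      have hopen : IsOpen ((F ω) ⁻¹' Set.Iio (q:ℝ)) := isOpen_Iio.preimage hcont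
      have hmem : U ω ∈ (F ω) ⁻¹' Set.Iio (q:ℝ) := lt_of_le_of_lt hle hq
      obtain ⟨ε, hε, hball⟩ := Metric.isOpen_iff.1 hopen _ hmem
      obtain ⟨r, hr1, hr2⟩ := exists_rat_btwn (show U ω < U ω + ε by linarith)
      have hrmem : (r:ℝ) ∈ (F ω) ⁻¹' Set.Iio (q:ℝ) := by
        refine hball ?_
        rw [Metric.mem_ball, Real.dist_eq, abs_sub_lt_iff]
        constructor <;> linarith
      refine Set.mem_iUnion.2 ⟨r, hr1.le, ?_⟩
      show g r ω < (q:ℝ)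
      rw [← hωg r]
      exact hrmem
    · intro hT'
      by_contra hgt
      push_neg at hgt
      obtain ⟨q, hq1, hq2⟩ := exists_rat_btwn hgt
      rw [hT] at hT'
      have hmem := Set.mem_iInter.1 hT' ⟨q, hq1⟩
      obtain ⟨r, hUr, hgr⟩ := Set.mem_iUnion.1 hmem
      have h1 : F ω (U ω) ≤ F ω (r:ℝ) := hmono.monotone hUr
      rw [hωg r] at h1
      have h2 : g r ω < (q:ℝ) := hgr
      exact absurd (lt_of_le_of_lt h1 (lt_trans h2 hq2)) (lt_irrefl _)
    · intro hgt
      have hopen : IsOpen ((F ω) ⁻¹' Set.Ioi t) := isOpen_Ioi.preimage hcont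
      have hmem : U ω ∈ (F ω) ⁻¹' Set.Ioi t := hgt
      obtain ⟨ε, hε, hball⟩ := Metric.isOpen_iff.1 hopen _ hmem
      obtain ⟨r, hr1, hr2⟩ := exists_rat_btwn (show U ω - ε < U ω by linarith)
      have hrmem : (r:ℝ) ∈ (F ω) ⁻¹' Set.Ioi t := by
        refine hball ?_
        rw [Metric.mem_ball, Real.dist_eq, abs_sub_lt_iff]
        constructor <;> linarith
      refine Set.mem_iUnion.2 ⟨r, hr2, ?_⟩
      show t ≤ g r ω
      rw [← hωg r]
      exact le_of_lt hrmem
  have hindTS : Set.indicator {ω | F ω (U ω) ≤ t} (fun _ => (1:ℝ)) =ᵐ[P]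
      Set.indicator T (fun _ => (1:ℝ)) := by
    filter_upwards [hae] with ω hω
    simp only [Set.indicator_apply, Set.mem_setOf_eq, hω.1]
  have hmain : (fun _ : Ω => t) =ᵐ[P] P[Set.indicator T (fun _ => (1:ℝ)) | 𝒢] := by
    refine ae_eq_condExp_of_forall_setIntegral_eq h𝒢
      ((integrable_const (1:ℝ)).indicator hTmeas)
      (fun s hs hμs => integrableOn_const hμs.ne) ?_
      (StronglyMeasurable.aestronglyMeasurable stronglyMeasurable_const)
    intro G hG hGfin
    rw [setIntegral_indicator hTmeas, setIntegral_const, setIntegral_const,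
      smul_eq_mul, smul_eq_mul, mul_one]
    -- goal : (P G).toReal * t = (P (G ∩ T)).toReal
    have hPGnn : (0:ℝ) ≤ (P G).toReal := ENNReal.toReal_nonneg
    have hupper : ∀ q : ℚ, t < (q:ℝ) → (P (G ∩ T)).toReal ≤ (q:ℝ) * (P G).toReal := by
      intro q hq
      have hqnn : (0:ℝ) ≤ (q:ℝ) := le_of_lt (lt_of_le_of_lt ht.1 hq)
      have hAq : P (G ∩ A q) ≤ ENNReal.ofReal ((q:ℝ) * (P G).toReal) := by
        rw [hA]
        refine pit_iUnion_bound P _ G _ fun s => ?_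
        refine (ENNReal.le_ofReal_iff_toReal_le (measure_ne_top _ _)
          (mul_nonneg hqnn hPGnn)).2 ?_
        exact pit_finite_upper P 𝒢 h𝒢 U g hgm hgint hgset (q:ℝ) hqnn s G hG
      have hsubset : G ∩ T ⊆ G ∩ A q :=
        Set.inter_subset_inter_right _ (Set.iInter_subset _ (⟨q, hq⟩ : {q : ℚ // t < (q:ℝ)}))
      calc (P (G ∩ T)).toReal ≤ (P (G ∩ A q)).toReal :=
            ENNReal.toReal_mono (measure_ne_top _ _) (measure_mono hsubset)
        _ ≤ (q:ℝ) * (P G).toReal :=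
            ENNReal.toReal_le_of_le_ofReal (mul_nonneg hqnn hPGnn) hAq
    have hupper' : (P (G ∩ T)).toReal ≤ t * (P G).toReal := by
      refine le_of_forall_pos_le_add fun ε hε => ?_
      have hd : (0:ℝ) < (P G).toReal + 1 := by linarith
      have hfr : (0:ℝ) < ε / ((P G).toReal + 1) := div_pos hε hd
      obtain ⟨q, hq1, hq2⟩ := exists_rat_btwn (show t < t + ε / ((P G).toReal + 1) by linarith)
      have h1 := hupper q hq1
      have h2 : (q:ℝ) * (P G).toReal ≤ (t + ε / ((P G).toReal + 1)) * (P G).toReal :=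
        mul_le_mul_of_nonneg_right hq2.le hPGnn
      have h3 : ε / ((P G).toReal + 1) * (P G).toReal ≤ ε := by
        rw [div_mul_eq_mul_div, div_le_iff₀ hd]
        nlinarith
      nlinarith
    have hlowA : (P (G ∩ A')).toReal ≤ (1 - t) * (P G).toReal := by
      have h1tnn : (0:ℝ) ≤ 1 - t := by linarith [ht.2]
      have hAq : P (G ∩ A') ≤ ENNReal.ofReal ((1 - t) * (P G).toReal) := by
        rw [hA']
        refine pit_iUnion_bound P _ G _ fun s => ?_
        refine (ENNReal.le_ofReal_iff_toReal_le (measure_ne_top _ _)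
          (mul_nonneg h1tnn hPGnn)).2 ?_
        exact pit_finite_lower P 𝒢 h𝒢 U (fun a => hUset (a:ℝ)) g hgm hgint hgset t ht.2 s G hG
      exact ENNReal.toReal_le_of_le_ofReal (mul_nonneg h1tnn hPGnn) hAq
    have hTc : P (G ∩ Tᶜ) ≤ P (G ∩ A') := by
      refine measure_mono_ae ?_
      filter_upwards [hae] with ω hω hmem
      refine ⟨hmem.1, ?_⟩
      have hnot : ¬ F ω (U ω) ≤ t := fun h => hmem.2 (hω.1.1 h)
      exact hω.2 (lt_of_not_ge hnot)
    have hsplit : (P (G ∩ T)).toReal + (P (G ∩ Tᶜ)).toReal = (P G).toReal := by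
      have := measure_inter_add_diff (μ := P) G hTmeas
      rw [Set.diff_eq] at this
      rw [← ENNReal.toReal_add (measure_ne_top _ _) (measure_ne_top _ _), this]
    have hlower : t * (P G).toReal ≤ (P (G ∩ T)).toReal := by
      have h2 : (P (G ∩ Tᶜ)).toReal ≤ (1 - t) * (P G).toReal :=
        le_trans (ENNReal.toReal_mono (measure_ne_top _ _) hTc) hlowA
      linarith
    simp only [measureReal_def]
    linarith
  exact (condExp_congr_ae hindTS).trans hmain.symm
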